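/- arXiv:math/0412498 — 6 statements merged into one kernel-verified Lean document; each statement's English description precedes it below -/
import Mathlib

section
/- For any semifilter 𝓕 on a countable set C, the double dual (𝓕⊥)⊥ equals 𝓕. -/
/-- A semifilter on a set `C`: a nonempty family of infinite subsets of `C`
closed under almost-supersets. -/
def IsSemifilter {C : Type*} (F : Set (Set C)) : Prop :=
  F.Nonempty ∧ (∀ A ∈ F, A.Infinite) ∧
    ∀ A ∈ F, ∀ B : Set C, (A \ B).Finite → B ∈ F

/-- The dual of a family: all infinite sets meeting every member of the family. -/
def dualSF {C : Type*} (F : Set (Set C)) : Set (Set C) :=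
  {G | G.Infinite ∧ ∀ A ∈ F, (G ∩ A).Nonempty}

theorem stmt1 {C : Type*} [Countable C] [Infinite C] (F : Set (Set C))
    (hF : IsSemifilter F) : dualSF (dualSF F) = F := by
  obtain ⟨hne, hinf, hclos⟩ := hF
  ext G
  constructor
  · rintro ⟨hG, hmeets⟩
    by_contra hGF
    have key : ∀ A ∈ F, (A \ G).Infinite := by
      intro A hA
      by_contra h
      rw [Set.not_infinite] at h
      exact hGF (hclos A hA G h)
    obtain ⟨A, hA⟩ := hne
    have hcomp : Gᶜ ∈ dualSF F := by
      refine ⟨(key A hA).mono (Set.diff_subset_compl A G), fun B hB => ?_⟩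
      obtain ⟨x, hx⟩ := (key B hB).nonempty
      exact ⟨x, hx.2, hx.1⟩
    obtain ⟨x, hx1, hx2⟩ := hmeets Gᶜ hcomp
    exact hx2 hx1
  · intro hG
    refine ⟨hinf G hG, fun H hH => ?_⟩
    obtain ⟨x, hx1, hx2⟩ := hH.2 G hG
    exact ⟨x, hx2, hx1⟩
end

section
/- Let Φ : X ⇒ Y be a compact-valued upper semicontinuous set-valued map between topological spaces with Φ(X) = Y. If X has the Menger property then so does Y. -/
/-- The Menger property: for every sequence of open covers one can choose
finite subfamilies whose unions cover the space. -/
def Menger (X : Type*) [TopologicalSpace X] : Prop :=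
  ∀ u : ℕ → Set (Set X), (∀ n, ∀ V ∈ u n, IsOpen V) → (∀ n, ⋃₀ u n = Set.univ) →
    ∃ v : ℕ → Set (Set X), (∀ n, v n ⊆ u n ∧ (v n).Finite) ∧
      ⋃ n, ⋃₀ v n = Set.univ

/-- A compact-valued upper semicontinuous surjective image of a Menger space is Menger. -/
theorem stmt6 {X Y : Type*} [TopologicalSpace X] [TopologicalSpace Y]
    (Φ : X → Set Y) (hcomp : ∀ x, IsCompact (Φ x))
    (husc : ∀ V : Set Y, IsOpen V → IsOpen {x | Φ x ⊆ V})
    (hsurj : ⋃ x, Φ x = Set.univ) (hX : Menger X) : Menger Y := by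
  intro u hopen hcov
  set w : ℕ → Set (Set X) := fun n =>
    {S | ∃ F : Set (Set Y), F ⊆ u n ∧ F.Finite ∧ S = {x | Φ x ⊆ ⋃₀ F}} with hw
  have hwopen : ∀ n, ∀ S ∈ w n, IsOpen S := by
    rintro n S ⟨F, hFu, hFfin, rfl⟩
    exact husc _ (isOpen_sUnion fun V hV => hopen n V (hFu hV))
  have hwcov : ∀ n, ⋃₀ w n = Set.univ := by
    intro n
    apply Set.eq_univ_of_forall
    intro x
    obtain ⟨F, hFu, hFfin, hsub⟩ := (hcomp x).elim_finite_subcover_image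
      (fun V (hV : V ∈ u n) => hopen n V hV)
      (by rw [← Set.sUnion_eq_biUnion, hcov n]; exact Set.subset_univ _)
    exact ⟨{x | Φ x ⊆ ⋃₀ F}, ⟨F, hFu, hFfin, rfl⟩, by
      rw [Set.mem_setOf_eq, Set.sUnion_eq_biUnion]; exact hsub⟩
  obtain ⟨t, ht, htcov⟩ := hX w hwopen hwcov
  choose! F hFu hFfin hFS using fun n S (hS : S ∈ t n) => (ht n).1 hS
  refine ⟨fun n => ⋃ S ∈ t n, F n S, fun n => ⟨?_, ?_⟩, ?_⟩
  · intro V hV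
    simp only [Set.mem_iUnion] at hV
    obtain ⟨S, hS, hVF⟩ := hV
    exact hFu n S hS hVF
  · exact Set.Finite.biUnion (ht n).2 fun S hS => hFfin n S hS
  · apply Set.eq_univ_of_forall
    intro y
    have hy : y ∈ ⋃ x, Φ x := by rw [hsurj]; trivial
    obtain ⟨x, hx⟩ := Set.mem_iUnion.mp hy
    have hxX : x ∈ ⋃ n, ⋃₀ t n := by rw [htcov]; trivial
    simp only [Set.mem_iUnion, Set.mem_sUnion] at hxX
    obtain ⟨n, S, hS, hxS⟩ := hxX
    have := hFS n S hS
    rw [this, Set.mem_setOf_eq] at hxS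
    obtain ⟨V, hVF, hyV⟩ := hxS hx
    refine Set.mem_iUnion.mpr ⟨n, V, ?_, hyV⟩
    exact Set.mem_iUnion.mpr ⟨S, Set.mem_iUnion.mpr ⟨hS, hVF⟩⟩
end

section
/- Let Φ : X ⇒ Y be a compact-valued upper semicontinuous set-valued map between topological spaces with Φ(X) = Y. If X has the Hurewicz property then so does Y. -/
/-- The Hurewicz property: for every sequence of open covers one can choose
finite subfamilies whose unions form a `γ`-cover of the space. -/
def Hurewicz (X : Type*) [TopologicalSpace X] : Prop :=
  ∀ u : ℕ → Set (Set X), (∀ n, ∀ V ∈ u n, IsOpen V) → (∀ n, ⋃₀ u n = Set.univ) →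
    ∃ v : ℕ → Set (Set X), (∀ n, v n ⊆ u n ∧ (v n).Finite) ∧
      ∀ x : X, {n : ℕ | x ∉ ⋃₀ v n}.Finite

/-- A compact-valued upper semicontinuous surjective image of a Hurewicz space
is Hurewicz. -/
theorem stmt7 {X Y : Type*} [TopologicalSpace X] [TopologicalSpace Y]
    (Φ : X → Set Y) (hcomp : ∀ x, IsCompact (Φ x))
    (husc : ∀ V : Set Y, IsOpen V → IsOpen {x | Φ x ⊆ V})
    (hsurj : ⋃ x, Φ x = Set.univ) (hX : Hurewicz X) : Hurewicz Y := by
  intro u hopen hcov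
  -- covers of X
  set w : ℕ → Set (Set X) := fun n =>
    {W | ∃ F : Set (Set Y), F ⊆ u n ∧ F.Finite ∧ W = {x | Φ x ⊆ ⋃₀ F}} with hw
  have hwopen : ∀ n, ∀ W ∈ w n, IsOpen W := by
    rintro n W ⟨F, hFu, hFfin, rfl⟩
    exact husc _ (isOpen_sUnion fun V hV => hopen n V (hFu hV))
  have hwcov : ∀ n, ⋃₀ w n = Set.univ := by
    intro n
    ext x
    simp only [Set.mem_univ, iff_true, Set.mem_sUnion]
    have hsub : Φ x ⊆ ⋃ V ∈ u n, V := by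
      rw [← Set.sUnion_eq_biUnion, hcov n]; exact Set.subset_univ _
    obtain ⟨F, hFu, hFfin, hFsub⟩ :=
      (hcomp x).elim_finite_subcover_image (fun V hV => hopen n V hV) hsub
    refine ⟨{x | Φ x ⊆ ⋃₀ F}, ⟨F, hFu, hFfin, rfl⟩, ?_⟩
    simpa [Set.sUnion_eq_biUnion] using hFsub
  obtain ⟨v', hv'sub, hv'γ⟩ := hX w hwopen hwcov
  have hex : ∀ n, ∀ W ∈ v' n, ∃ F : Set (Set Y),
      F ⊆ u n ∧ F.Finite ∧ W = {x | Φ x ⊆ ⋃₀ F} := fun n W hW => (hv'sub n).1 hW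
  choose F hFu hFfin hFeq using hex
  refine ⟨fun n => ⋃ (W : v' n), F n W W.2, fun n => ⟨?_, ?_⟩, fun y => ?_⟩
  · exact Set.iUnion_subset fun W => hFu n W W.2
  · haveI : Finite ↥(v' n) := (hv'sub n).2.to_subtype
    exact Set.finite_iUnion fun W => hFfin n W W.2
  · have hy : y ∈ ⋃ x, Φ x := hsurj ▸ Set.mem_univ y
    obtain ⟨x, hx⟩ := Set.mem_iUnion.mp hy
    refine (hv'γ x).subset fun n hn => ?_
    simp only [Set.mem_setOf_eq] at hn ⊢
    intro hmem
    obtain ⟨W, hW, hxW⟩ := hmem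
    apply hn
    have : Φ x ⊆ ⋃₀ F n W hW := by
      have := hFeq n W hW ▸ hxW
      exact this
    obtain ⟨V, hV, hyV⟩ := this hx
    exact ⟨V, Set.mem_iUnion.mpr ⟨⟨W, hW⟩, hV⟩, hyV⟩
end

section
/- Let X be a topological space, u a countable large open cover of X (every point lies in infinitely many members of u). Then the set-valued map Φ : X ⇒ 𝒫(u) sending x to ↑I(x) = {w ⊆ u : I(x) ⊆ w}, where I(x) = {U ∈ u : x ∈ U}, is compact-valued and upper semicontinuous, where 𝒫(u) is identified with Cantor space 2^u. -/
/-- For a countable large open cover `u` of `X`, the set-valued map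
`x ↦ ↑I(x) = {w ⊆ u : I(x) ⊆ w} ⊆ 𝒫(u) ≅ 2^u` is compact-valued and
upper semicontinuous. -/
theorem stmt10 {X : Type*} [TopologicalSpace X] (u : Set (Set X))
    (hcount : u.Countable) (hopen : ∀ U ∈ u, IsOpen U)
    (hlarge : ∀ x : X, {U ∈ u | x ∈ U}.Infinite)
    (Φ : X → Set (↥u → Bool))
    (hΦ : Φ = fun x => {w | ∀ U : ↥u, x ∈ (U : Set X) → w U = true}) :
    (∀ x : X, IsCompact (Φ x)) ∧
      ∀ V : Set (↥u → Bool), IsOpen V → IsOpen {x : X | Φ x ⊆ V} := by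
  subst hΦ
  constructor
  · intro x
    have hclosed : IsClosed {w : ↥u → Bool | ∀ U : ↥u, x ∈ (U : Set X) → w U = true} := by
      have : {w : ↥u → Bool | ∀ U : ↥u, x ∈ (U : Set X) → w U = true}
          = ⋂ (U : ↥u) (_ : x ∈ (U : Set X)), (fun w : ↥u → Bool => w U) ⁻¹' {true} := by
        ext w; simp [Set.mem_iInter]
      rw [this]
      exact isClosed_iInter fun U => isClosed_iInter fun _ =>
        (isClosed_discrete _).preimage (continuous_apply U)
    exact hclosed.isCompact
  · intro V hV
    rw [isOpen_iff_forall_mem_open]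
    intro x hx
    simp only [Set.mem_setOf_eq] at hx
    -- Vᶜ is compact and covered by the clopen sets {w | w U = false} for U ∋ x
    have hcov : Vᶜ ⊆ ⋃ (U : {U : ↥u // x ∈ (U : Set X)}), {w : ↥u → Bool | w U.1 = false} := by
      intro w hw
      by_contra h
      simp only [Set.mem_iUnion, Set.mem_setOf_eq, not_exists] at h
      apply hw
      apply hx
      intro U hU
      have := h ⟨U, hU⟩
      cases hwU : w U with
      | false => exact absurd hwU this
      | true => rfl
    have hcpt : IsCompact (Vᶜ) := hV.isClosed_compl.isCompact
    obtain ⟨F, hF⟩ := hcpt.elim_finite_subcover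
      (fun U : {U : ↥u // x ∈ (U : Set X)} => {w : ↥u → Bool | w U.1 = false})
      (fun U => show IsOpen ((fun w : ↥u → Bool => w U.1) ⁻¹' {false}) from
        (isOpen_discrete _).preimage (continuous_apply U.1)) hcov
    refine ⟨⋂ U ∈ F, ((U : ↥u) : Set X), ?_, ?_, ?_⟩
    · intro y hy
      simp only [Set.mem_iInter] at hy
      simp only [Set.mem_setOf_eq]
      intro w hw
      by_contra hwV
      have := hF hwV
      simp only [Set.mem_iUnion, Set.mem_setOf_eq] at this
      obtain ⟨U, hUF, hUw⟩ := this
      have : w U.1 = true := hw U.1 (hy U hUF)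
      simp [this] at hUw
    · exact Set.Finite.isOpen_biInter F.finite_toSet
        (fun U _ => hopen U.1 U.1.2)
    · simp only [Set.mem_iInter]
      exact fun U _ => U.2
end

section
/- If X is a Menger topological space and u is a countable large open cover of X, then the semifilter 𝒰(u) on u, defined as the smallest semifilter containing {I(x) : x ∈ X} where I(x) = {U ∈ u : x ∈ U}, is a Menger subspace of 𝒫(u) ≅ 2^u. -/
/-- Menger is preserved by multiplying with `ℕ`. -/
theorem menger_nat_prod {X : Type*} [TopologicalSpace X] (hX : Menger X) :
    Menger (ℕ × X) := by
  intro U hUopen hUcover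
  set p : ℕ × ℕ ≃ ℕ := Nat.pairEquiv with hp
  -- slice covers of X
  set c : ℕ → ℕ → Set (Set X) := fun k m =>
    (fun V : Set (ℕ × X) => {x | (k, x) ∈ V}) '' U (p (k, m)) with hc
  have hcopen : ∀ k m, ∀ s ∈ c k m, IsOpen s := by
    rintro k m s ⟨V, hV, rfl⟩
    exact (hUopen _ V hV).preimage (Continuous.prodMk_right k)
  have hccover : ∀ k m, ⋃₀ c k m = Set.univ := by
    intro k m
    ext x
    simp only [Set.mem_univ, iff_true, Set.mem_sUnion]
    have : (k, x) ∈ ⋃₀ U (p (k, m)) := by rw [hUcover]; trivial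
    obtain ⟨V, hV, hxV⟩ := this
    exact ⟨_, ⟨V, hV, rfl⟩, hxV⟩
  have := fun k => hX (c k) (hcopen k) (hccover k)
  choose v hv1 hv2 using this
  -- pick original sets for each slice member
  have hpick : ∀ k m s, ∃ V : Set (ℕ × X),
      s ∈ v k m → V ∈ U (p (k, m)) ∧ {x | (k, x) ∈ V} = s := by
    intro k m s
    by_cases hs : s ∈ v k m
    · obtain ⟨V, hV, hVs⟩ := (hv1 k m).1 hs
      exact ⟨V, fun _ => ⟨hV, hVs⟩⟩
    · exact ⟨∅, fun h => absurd h hs⟩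
  choose V hV using hpick
  refine ⟨fun n => (fun s => V (p.symm n).1 (p.symm n).2 s) ''
    (v (p.symm n).1 (p.symm n).2), fun n => ⟨?_, ?_⟩, ?_⟩
  · rintro W ⟨s, hs, rfl⟩
    have := (hV _ _ s hs).1
    rwa [Prod.mk.eta, p.apply_symm_apply] at this
  · exact ((hv1 _ _).2.image _)
  · ext ⟨k, x⟩
    simp only [Set.mem_univ, iff_true, Set.mem_iUnion, Set.mem_sUnion]
    have : x ∈ ⋃ m, ⋃₀ v k m := by rw [hv2 k]; trivial
    obtain ⟨m, hm⟩ := Set.mem_iUnion.1 this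
    obtain ⟨s, hs, hxs⟩ := hm
    refine ⟨p (k, m), V k m s, ?_, ?_⟩
    · have hq : p.symm (p (k, m)) = (k, m) := p.symm_apply_apply _
      refine ⟨s, ?_, ?_⟩ <;> simp [hq, hs]
    · have := (hV k m s hs).2
      rw [← this] at hxs
      exact hxs

/-- Menger is preserved by compact-valued upper semicontinuous images. -/
theorem menger_usc_image {Z T : Type*} [TopologicalSpace Z] [TopologicalSpace T]
    (hZ : Menger Z) (K : Z → Set T) (hcomp : ∀ z, IsCompact (K z))
    (husc : ∀ O : Set T, IsOpen O → IsOpen {z | K z ⊆ O})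
    (hKcover : ⋃ z, K z = Set.univ) : Menger T := by
  classical
  intro U hUopen hUcover
  set c : ℕ → Set (Set Z) := fun n =>
    (fun w : Finset (Set T) => {z | K z ⊆ ⋃₀ (↑w : Set (Set T))}) '' {w | ↑w ⊆ U n}
    with hc
  have hcopen : ∀ n, ∀ O ∈ c n, IsOpen O := by
    rintro n O ⟨w, hw, rfl⟩
    exact husc _ (isOpen_sUnion fun t ht => hUopen n t (hw ht))
  have hccover : ∀ n, ⋃₀ c n = Set.univ := by
    intro n
    ext z
    simp only [Set.mem_univ, iff_true, Set.mem_sUnion]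
    have h1 : K z ⊆ ⋃ i : ↥(U n), (i : Set T) := by
      intro t _
      have : t ∈ ⋃₀ U n := by rw [hUcover]; trivial
      obtain ⟨W, hW, htW⟩ := this
      exact Set.mem_iUnion.2 ⟨⟨W, hW⟩, htW⟩
    obtain ⟨t, ht⟩ := (hcomp z).elim_finite_subcover (fun i : ↥(U n) => (i : Set T))
      (fun i => hUopen n i i.2) h1
    refine ⟨_, ⟨t.image Subtype.val, ?_, rfl⟩, ?_⟩
    · intro W hW
      simp only [Finset.coe_image, Set.mem_image, Finset.mem_coe] at hW
      obtain ⟨i, _, rfl⟩ := hW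
      exact i.2
    · refine Set.mem_setOf_eq ▸ ht.trans ?_
      intro t' ht'
      simp only [Set.mem_iUnion, exists_prop] at ht'
      obtain ⟨i, hi, hti⟩ := ht'
      exact ⟨i, Finset.mem_coe.2 (Finset.mem_image.2 ⟨i, hi, rfl⟩), hti⟩
  obtain ⟨s, hs1, hs2⟩ := hZ c hcopen hccover
  have hpick : ∀ n O, ∃ w : Finset (Set T),
      O ∈ s n → (↑w : Set (Set T)) ⊆ U n ∧ O ⊆ {z | K z ⊆ ⋃₀ (↑w : Set (Set T))} := by
    intro n O
    by_cases hO : O ∈ s n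
    · obtain ⟨w, hw, hOw⟩ := (hs1 n).1 hO
      exact ⟨w, fun _ => ⟨hw, hOw ▸ subset_rfl⟩⟩
    · exact ⟨∅, fun h => absurd h hO⟩
  choose w hw using hpick
  refine ⟨fun n => ⋃ O ∈ s n, (↑(w n O) : Set (Set T)), fun n => ⟨?_, ?_⟩, ?_⟩
  · rintro W hW
    simp only [Set.mem_iUnion, exists_prop] at hW
    obtain ⟨O, hO, hWO⟩ := hW
    exact (hw n O hO).1 hWO
  · exact (hs1 n).2.biUnion fun O _ => (w n O).finite_toSet
  · ext t
    simp only [Set.mem_univ, iff_true, Set.mem_iUnion, Set.mem_sUnion]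
    have : t ∈ ⋃ z, K z := by rw [hKcover]; trivial
    obtain ⟨z, hz⟩ := Set.mem_iUnion.1 this
    have : z ∈ ⋃ n, ⋃₀ s n := by rw [hs2]; trivial
    obtain ⟨n, hn⟩ := Set.mem_iUnion.1 this
    obtain ⟨O, hO, hzO⟩ := hn
    have := (hw n O hO).2 hzO hz
    obtain ⟨W, hW, htW⟩ := this
    exact ⟨n, W, ⟨O, hO, hW⟩, htW⟩

/-- Finite subcover lemma in `2^ι`. -/
theorem key_finset {ι : Type*} (S : Set ι) (O : Set (ι → Bool)) (hO : IsOpen O)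
    (h : {f : ι → Bool | ∀ i ∈ S, f i = true} ⊆ O) :
    ∃ F : Finset ι, ↑F ⊆ S ∧ {f : ι → Bool | ∀ i ∈ F, f i = true} ⊆ O := by
  classical
  have hclosed : ∀ i : ↥S, IsClosed {f : ι → Bool | f i = true} := by
    intro i
    exact (isClosed_discrete {true}).preimage (continuous_apply (A := fun _ : ι => Bool) (i : ι))
  have hcompl : IsCompact (Oᶜ) := hO.isClosed_compl.isCompact
  have hinter : Oᶜ ∩ ⋂ i : ↥S, {f : ι → Bool | f i = true} = ∅ := by
    rw [Set.eq_empty_iff_forall_notMem]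
    rintro f ⟨hfO, hf⟩
    simp only [Set.mem_iInter, Set.mem_setOf_eq] at hf
    exact hfO (h fun i hi => by simpa using hf ⟨i, hi⟩)
  obtain ⟨t, ht⟩ := hcompl.elim_finite_subfamily_closed _ hclosed hinter
  refine ⟨t.image Subtype.val, ?_, ?_⟩
  · intro i hi
    simp only [Finset.coe_image, Set.mem_image, Finset.mem_coe] at hi
    obtain ⟨j, _, rfl⟩ := hi
    exact j.2
  · intro f hf
    by_contra hfO
    have : f ∈ Oᶜ ∩ ⋂ i ∈ t, {g : ι → Bool | g i = true} := by
      refine ⟨hfO, ?_⟩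
      simp only [Set.mem_iInter, Set.mem_setOf_eq]
      intro i hi
      exact hf i (Finset.mem_image.2 ⟨i, hi, rfl⟩)
    rw [ht] at this
    exact this

/-- If `X` is Menger and `u` is a countable large open cover of `X`, then the
smallest semifilter `𝒰(u)` on `u` containing all the sets `I(x) = {U ∈ u : x ∈ U}`,
i.e. `{w ⊆ u : ∃ x, I(x) ⊆* w}`, is a Menger subspace of `𝒫(u) ≅ 2^u`. -/
theorem stmt11 {X : Type*} [TopologicalSpace X] (hX : Menger X)
    (u : Set (Set X)) (hcount : u.Countable) (hopen : ∀ U ∈ u, IsOpen U)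
    (hlarge : ∀ x : X, {U ∈ u | x ∈ U}.Infinite)
    (𝒰 : Set (↥u → Bool))
    (h𝒰 : 𝒰 = {w | ∃ x : X, {U : ↥u | x ∈ (U : Set X) ∧ w U = false}.Finite}) :
    Menger ↥𝒰 := by
  classical
  have hcu : Countable ↥u := hcount.to_subtype
  obtain ⟨e, he⟩ := exists_surjective_nat (Finset ↥u)
  set Kt : ℕ × X → Set (↥u → Bool) := fun p =>
    {f | ∀ U : ↥u, p.2 ∈ (U : Set X) → U ∉ e p.1 → f U = true} with hKt
  have hKtsub : ∀ p, Kt p ⊆ 𝒰 := by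
    rintro ⟨n, x⟩ f hf
    rw [h𝒰]
    refine ⟨x, Set.Finite.subset (e n).finite_toSet ?_⟩
    rintro U ⟨hxU, hfU⟩
    by_contra hUe
    have := hf U hxU (fun h => hUe (Finset.mem_coe.2 h))
    rw [this] at hfU
    exact Bool.noConfusion hfU
  set K : ℕ × X → Set ↥𝒰 := fun p => Subtype.val ⁻¹' Kt p with hK
  have hKtclosed : ∀ p, IsClosed (Kt p) := by
    rintro ⟨n, x⟩
    have : Kt (n, x) = ⋂ (U : ↥u) (_ : x ∈ (U : Set X)) (_ : U ∉ e n),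
        {f : ↥u → Bool | f U = true} := by
      ext f
      simp only [hKt, Set.mem_setOf_eq, Set.mem_iInter]
    rw [this]
    exact isClosed_iInter fun U => isClosed_iInter fun _ => isClosed_iInter fun _ =>
      (isClosed_discrete {true}).preimage
        (continuous_apply (A := fun _ : ↥u => Bool) U)
  apply menger_usc_image (menger_nat_prod hX) K
  · -- compactness
    intro p
    rw [Topology.IsEmbedding.subtypeVal.isCompact_iff]
    have himg : Subtype.val '' (K p) = Kt p := by
      rw [hK, Subtype.image_preimage_coe, Set.inter_eq_self_of_subset_right (hKtsub p)]
    rw [himg]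
    exact (hKtclosed p).isCompact
  · -- upper semicontinuity
    intro O hO
    obtain ⟨O', hO', rfl⟩ := isOpen_induced_iff.1 hO
    rw [isOpen_iff_mem_nhds]
    rintro ⟨n, x⟩ hp
    have hsub : Kt (n, x) ⊆ O' := by
      intro f hf
      exact hp (show (⟨f, hKtsub _ hf⟩ : ↥𝒰) ∈ K (n, x) from hf)
    obtain ⟨F, hFS, hFO⟩ := key_finset {U : ↥u | x ∈ (U : Set X) ∧ U ∉ e n} O' hO'
      (fun f hf => hsub (fun U h1 h2 => hf U ⟨h1, h2⟩))
    set N : Set X := ⋂ (U : ↥u) (_ : U ∈ F), (U : Set X) with hN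
    have hNopen : IsOpen N := isOpen_biInter_finset fun U _ => hopen U U.2
    have hxN : x ∈ N := Set.mem_iInter₂.2 fun U hU => (hFS (Finset.mem_coe.2 hU)).1
    rw [mem_nhds_prod_iff]
    refine ⟨{n}, (isOpen_discrete _).mem_nhds rfl, N, hNopen.mem_nhds hxN, ?_⟩
    rintro ⟨m, y⟩ ⟨hm, hy⟩
    simp only [Set.mem_singleton_iff] at hm
    subst hm
    intro w hw
    refine hFO ?_
    intro U hU
    obtain ⟨hxU, hUe⟩ := hFS (Finset.mem_coe.2 hU)
    exact hw U (Set.mem_iInter₂.1 hy U hU) hUe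
  · -- coverage
    ext w
    simp only [Set.mem_univ, iff_true, Set.mem_iUnion]
    have hw : (w : ↥u → Bool) ∈ {g : ↥u → Bool | ∃ x : X, {U : ↥u | x ∈ (U : Set X) ∧ g U = false}.Finite} := h𝒰.subset w.2
    obtain ⟨x, hfin⟩ := hw
    obtain ⟨n, hn⟩ := he hfin.toFinset
    refine ⟨(n, x), ?_⟩
    intro U hxU hUe
    by_contra htrue
    have hfalse : (w : ↥u → Bool) U = false := by
      cases h : (w : ↥u → Bool) U
      · rfl
      · exact absurd h htrue
    exact hUe (hn ▸ hfin.mem_toFinset.2 ⟨hxU, hfalse⟩)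
end

section
/- If T ⊆ ℕ^ω is dominating with respect to eventual dominance ≤*, then for some i ∈ ω the shifted set {(x_{n+i})_{n∈ω} : x ∈ T} is dominating in the strong sense: for every y ∈ ℕ^ω there exists an element z of it with y(n) ≤ z(n) for all n. -/
/-- If `T ⊆ ℕ^ω` is dominating with respect to eventual dominance, then some
shift of `T` is dominating in the strong (everywhere) sense. -/
theorem stmt17 (T : Set (ℕ → ℕ))
    (hT : ∀ y : ℕ → ℕ, ∃ x ∈ T, {n : ℕ | ¬ y n ≤ x n}.Finite) :
    ∃ i : ℕ, ∀ y : ℕ → ℕ, ∃ x ∈ T, ∀ n, y n ≤ x (n + i) := by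
  by_contra h
  push_neg at h
  choose y hy using h
  set Y : ℕ → ℕ := fun m => (Finset.range (m + 1)).sup (fun i => y i (m - i)) with hY
  obtain ⟨x, hxT, hfin⟩ := hT Y
  obtain ⟨N, hN⟩ := hfin.bddAbove
  obtain ⟨n, hn⟩ := hy (N + 1) x hxT
  have h1 : y (N + 1) n ≤ Y (n + (N + 1)) := by
    have heq : y (N + 1) n = y (N + 1) (n + (N + 1) - (N + 1)) := by congr 1; omega
    rw [heq, hY]
    show y (N + 1) (n + (N + 1) - (N + 1)) ≤ (Finset.range (n + (N + 1) + 1)).sup fun i => y i (n + (N + 1) - i)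
    have hmem : N + 1 ∈ Finset.range (n + (N + 1) + 1) := Finset.mem_range.mpr (by omega)
    exact Finset.le_sup (f := fun i => y i (n + (N + 1) - i)) hmem
  have h2 : Y (n + (N + 1)) ≤ x (n + (N + 1)) := by
    by_contra h2
    have := hN (Set.mem_setOf.mpr h2)
    omega
  have := le_trans h1 h2
  omega
end
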